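/- arXiv:2512.16213 — 2 statements merged into one kernel-verified Lean document; each statement's English description precedes it below -/
import Mathlib

section
/- Let p, q be probability densities on ℝ^m with S(p) = ∫√p, S(q) = ∫√q, and A(p,q) = ∫ (p q)^{1/4} all finite and positive. Define D_MSKL(p‖q) = (1/2)[∫ √p log(√p/√q) + ∫ √q log(√q/√p)]. Then D_MSKL(p‖q) ≥ S(p) log S(p) + S(q) log S(q) − (S(p) + S(q)) log A(p,q). -/
open Real MeasureTheory

lemma xlog_aux {x y : ℝ} (hx : 0 < x) (hy : 0 < y) : x - y ≤ x * Real.log (x / y) := by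
  have h := Real.log_le_sub_one_of_pos (div_pos hy hx)
  rw [Real.log_div hy.ne' hx.ne'] at h
  rw [Real.log_div hx.ne' hy.ne']
  have hyx : y / x * x = y := div_mul_cancel₀ _ hx.ne'
  nlinarith [mul_le_mul_of_nonneg_right h hx.le]

lemma half_kl_aux (m : ℕ) (r s : (Fin m → ℝ) → ℝ) (hr : ∀ x, 0 < r x) (hs : ∀ x, 0 < s x)
    (hR : Integrable r) (hT : Integrable (fun x => Real.sqrt (r x * s x)))
    (hL : Integrable (fun x => r x * Real.log (r x / s x)))
    (hR0 : 0 < ∫ x, r x) (hT0 : 0 < ∫ x, Real.sqrt (r x * s x)) :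
    (∫ x, r x) * (Real.log (∫ x, r x) - Real.log (∫ x, Real.sqrt (r x * s x))) ≤
      (1 / 2) * ∫ x, r x * Real.log (r x / s x) := by
  set R := ∫ x, r x with hRdef
  set T := ∫ x, Real.sqrt (r x * s x) with hTdef
  set c := R / T with hcdef
  have hc : 0 < c := div_pos hR0 hT0
  have hpt : ∀ x, r x - c * Real.sqrt (r x * s x) ≤
      (1 / 2) * (r x * Real.log (r x / s x)) - Real.log c * r x := by
    intro x
    have ha := hr x
    have hb := hs x
    have htpos : 0 < Real.sqrt (r x * s x) := Real.sqrt_pos.mpr (mul_pos ha hb)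
    have base := xlog_aux ha (mul_pos hc htpos)
    have heq : r x * Real.log (r x / (c * Real.sqrt (r x * s x))) =
        (1 / 2) * (r x * Real.log (r x / s x)) - Real.log c * r x := by
      rw [Real.log_div ha.ne' (mul_pos hc htpos).ne',
        Real.log_mul hc.ne' htpos.ne', Real.log_sqrt (mul_pos ha hb).le,
        Real.log_mul ha.ne' hb.ne', Real.log_div ha.ne' hb.ne']
      ring
    linarith [base, heq.ge]
  have hIL : Integrable (fun x => r x - c * Real.sqrt (r x * s x)) := hR.sub (hT.const_mul c)
  have hIR : Integrable (fun x => (1 / 2) * (r x * Real.log (r x / s x)) - Real.log c * r x) :=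
    (hL.const_mul (1 / 2)).sub (hR.const_mul (Real.log c))
  have hmono := integral_mono hIL hIR hpt
  rw [integral_sub hR (hT.const_mul c), integral_sub (hL.const_mul (1 / 2)) (hR.const_mul (Real.log c)),
    MeasureTheory.integral_const_mul, MeasureTheory.integral_const_mul, MeasureTheory.integral_const_mul] at hmono
  have hcT : c * T = R := div_mul_cancel₀ _ hT0.ne'
  have hlogc : Real.log c = Real.log R - Real.log T := Real.log_div hR0.ne' hT0.ne'
  rw [← hRdef, ← hTdef, hcT, hlogc] at hmono
  nlinarith [hmono]

/-- Distribution-free lower bound for the Modified Symmetric KL divergence: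
`D_MSKL(p‖q) ≥ S(p) log S(p) + S(q) log S(q) − (S(p)+S(q)) log A(p,q)`. -/
theorem mskl_lower_bound (m : ℕ) (p q : (Fin m → ℝ) → ℝ)
    (hp : ∀ x, 0 < p x) (hq : ∀ x, 0 < q x)
    (hp1 : ∫ x, p x = 1) (hq1 : ∫ x, q x = 1)
    (hSp0 : 0 < ∫ x, Real.sqrt (p x)) (hSq0 : 0 < ∫ x, Real.sqrt (q x))
    (hA0 : 0 < ∫ x, (p x * q x) ^ ((1 : ℝ) / 4))
    (hSp : Integrable (fun x => Real.sqrt (p x)))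
    (hSq : Integrable (fun x => Real.sqrt (q x)))
    (hA : Integrable (fun x => (p x * q x) ^ ((1 : ℝ) / 4)))
    (hl1 : Integrable (fun x => Real.sqrt (p x) * Real.log (Real.sqrt (p x) / Real.sqrt (q x))))
    (hl2 : Integrable (fun x => Real.sqrt (q x) * Real.log (Real.sqrt (q x) / Real.sqrt (p x)))) :
    (∫ x, Real.sqrt (p x)) * Real.log (∫ x, Real.sqrt (p x)) +
      (∫ x, Real.sqrt (q x)) * Real.log (∫ x, Real.sqrt (q x)) -
      ((∫ x, Real.sqrt (p x)) + (∫ x, Real.sqrt (q x))) *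
        Real.log (∫ x, (p x * q x) ^ ((1 : ℝ) / 4)) ≤
    (1 / 2) * ((∫ x, Real.sqrt (p x) * Real.log (Real.sqrt (p x) / Real.sqrt (q x))) +
      (∫ x, Real.sqrt (q x) * Real.log (Real.sqrt (q x) / Real.sqrt (p x)))) := by
  have hkey : (fun x => (p x * q x) ^ ((1 : ℝ) / 4)) =
      fun x => Real.sqrt (Real.sqrt (p x) * Real.sqrt (q x)) := by
    funext x
    rw [← Real.sqrt_mul (hp x).le, Real.sqrt_eq_rpow, Real.sqrt_eq_rpow,
      ← Real.rpow_mul (mul_pos (hp x) (hq x)).le]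
    norm_num
  have hkey' : (fun x => (p x * q x) ^ ((1 : ℝ) / 4)) =
      fun x => Real.sqrt (Real.sqrt (q x) * Real.sqrt (p x)) := by
    rw [hkey]; funext x; rw [mul_comm]
  have h1 := half_kl_aux m (fun x => Real.sqrt (p x)) (fun x => Real.sqrt (q x))
    (fun x => Real.sqrt_pos.mpr (hp x)) (fun x => Real.sqrt_pos.mpr (hq x))
    hSp (hkey ▸ hA) hl1 hSp0 (hkey ▸ hA0)
  have h2 := half_kl_aux m (fun x => Real.sqrt (q x)) (fun x => Real.sqrt (p x))
    (fun x => Real.sqrt_pos.mpr (hq x)) (fun x => Real.sqrt_pos.mpr (hp x))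
    hSq (hkey' ▸ hA) hl2 hSq0 (hkey' ▸ hA0)
  rw [← hkey] at h1
  rw [← hkey'] at h2
  have hAeq : (∫ x, (q x * p x) ^ ((1 : ℝ) / 4)) = ∫ x, (p x * q x) ^ ((1 : ℝ) / 4) := by
    congr 1; funext x; rw [mul_comm]
  nlinarith [h1, h2]
end

section
/- Suppose two univariate Gaussian mixtures Σ_{i=1}^K α_i N(x; μ_i, σ_i²) and Σ_{j=1}^L β_j N(x; ν_j, τ_j²) with positive weights agree for all x in a set that is unbounded above. Suppose further that within each mixture the parameter pairs (σ_i², μ_i) are distinct and ordered lexicographically (increasing variance, then increasing mean). Then K = L and α_i = β_i, μ_i = ν_i, σ_i² = τ_i² for every i. -/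
open Real Filter

/-- Univariate Gaussian density `N(x; μ, s)` with mean `μ` and variance `s`. -/
noncomputable def gauss1 (μ s x : ℝ) : ℝ :=
  (2 * Real.pi * s) ^ (-(1 : ℝ) / 2) * Real.exp (-(x - μ) ^ 2 / (2 * s))

lemma gauss1_pos {μ s : ℝ} (hs : 0 < s) (x : ℝ) : 0 < gauss1 μ s x := by
  have h2 : (0:ℝ) < 2 * Real.pi * s := by positivity
  exact mul_pos (Real.rpow_pos_of_pos h2 _) (Real.exp_pos _)

lemma lex_trans {a1 b1 a2 b2 a3 b3 : ℝ}
    (h1 : a1 < a2 ∨ (a1 = a2 ∧ b1 < b2)) (h2 : a2 < a3 ∨ (a2 = a3 ∧ b2 < b3)) :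
    a1 < a3 ∨ (a1 = a3 ∧ b1 < b3) := by
  rcases h1 with h1 | ⟨e1, l1⟩ <;> rcases h2 with h2 | ⟨e2, l2⟩
  · exact Or.inl (h1.trans h2)
  · exact Or.inl (e2 ▸ h1)
  · exact Or.inl (e1 ▸ h2)
  · exact Or.inr ⟨e1.trans e2, l1.trans l2⟩

lemma tendsto_ratio {m' s' m s : ℝ} (hs' : 0 < s') (hs : 0 < s)
    (h : s' < s ∨ (s' = s ∧ m' < m)) :
    Tendsto (fun x => gauss1 m' s' x / gauss1 m s x) atTop (nhds 0) := by
  have hq : Tendsto (fun x => (x - m) ^ 2 / (2 * s) - (x - m') ^ 2 / (2 * s')) atTop atBot := by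
    rcases h with h | ⟨rfl, hm⟩
    · have key : (fun x => (x - m) ^ 2 / (2 * s) - (x - m') ^ 2 / (2 * s'))
          = fun x => ((1 / (2 * s) - 1 / (2 * s')) * x + (m' / s' - m / s)) * x
            + (m ^ 2 / (2 * s) - m' ^ 2 / (2 * s')) := by
        funext x; field_simp; ring
      rw [key]
      apply tendsto_atBot_add_const_right
      apply Filter.Tendsto.atBot_mul_atTop₀ _ tendsto_id
      apply tendsto_atBot_add_const_right
      have ha : (1 / (2 * s) - 1 / (2 * s')) < 0 := by
        have : 1 / (2 * s) < 1 / (2 * s') := by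
          apply one_div_lt_one_div_of_lt <;> linarith
        linarith
      exact Filter.Tendsto.const_mul_atTop_of_neg ha tendsto_id
    · have key : (fun x => (x - m) ^ 2 / (2 * s') - (x - m') ^ 2 / (2 * s'))
          = fun x => ((m' - m) / s') * x + (m ^ 2 - m' ^ 2) / (2 * s') := by
        funext x; field_simp; ring
      rw [key]
      apply tendsto_atBot_add_const_right
      have ha : (m' - m) / s' < 0 := div_neg_of_neg_of_pos (by linarith) hs'
      exact Filter.Tendsto.const_mul_atTop_of_neg ha tendsto_id
  have heq' : ∀ x, gauss1 m' s' x / gauss1 m s x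
      = ((2 * Real.pi * s') ^ (-(1:ℝ) / 2) / (2 * Real.pi * s) ^ (-(1:ℝ) / 2))
        * Real.exp ((x - m) ^ 2 / (2 * s) - (x - m') ^ 2 / (2 * s')) := by
    intro x
    rw [gauss1, gauss1, mul_div_mul_comm, ← Real.exp_sub]
    congr 1
    ring
  simp_rw [heq']
  have := (Real.tendsto_exp_atBot.comp hq).const_mul
    ((2 * Real.pi * s') ^ (-(1:ℝ) / 2) / (2 * Real.pi * s) ^ (-(1:ℝ) / 2))
  simpa using this

lemma sum_ratio_tendsto_zero {n : ℕ} (α μ s : Fin n → ℝ) (M S : ℝ) (hS : 0 < S)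
    (hs : ∀ i, 0 < s i) (h : ∀ i, s i < S ∨ (s i = S ∧ μ i < M)) :
    Tendsto (fun x => (∑ i, α i * gauss1 (μ i) (s i) x) / gauss1 M S x) atTop (nhds 0) := by
  have key : (fun x => (∑ i, α i * gauss1 (μ i) (s i) x) / gauss1 M S x)
      = fun x => ∑ i, α i * (gauss1 (μ i) (s i) x / gauss1 M S x) := by
    funext x; rw [Finset.sum_div]; exact Finset.sum_congr rfl fun i _ => (mul_div_assoc _ _ _)
  rw [key]
  have := tendsto_finset_sum Finset.univ
    (fun i (_ : i ∈ Finset.univ) => (tendsto_ratio (hs i) hS (h i)).const_mul (α i))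
  simpa using this

lemma mixture_ratio {K : ℕ} (α μ s : Fin (K + 1) → ℝ) (hs : ∀ i, 0 < s i)
    (hord : ∀ i j, i < j → s i < s j ∨ (s i = s j ∧ μ i < μ j)) :
    Tendsto (fun x => (∑ i, α i * gauss1 (μ i) (s i) x)
      / gauss1 (μ (Fin.last K)) (s (Fin.last K)) x) atTop (nhds (α (Fin.last K))) := by
  have key : (fun x => (∑ i, α i * gauss1 (μ i) (s i) x)
      / gauss1 (μ (Fin.last K)) (s (Fin.last K)) x)
      = fun x => (∑ i : Fin K, α i.castSucc * gauss1 (μ i.castSucc) (s i.castSucc) x)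
          / gauss1 (μ (Fin.last K)) (s (Fin.last K)) x + α (Fin.last K) := by
    funext x
    rw [Fin.sum_univ_castSucc, add_div, mul_div_assoc,
      div_self (ne_of_gt (gauss1_pos (hs _) x)), mul_one]
  rw [key]
  have h0 := sum_ratio_tendsto_zero (fun i : Fin K => α i.castSucc)
    (fun i => μ i.castSucc) (fun i => s i.castSucc) (μ (Fin.last K)) (s (Fin.last K))
    (hs _) (fun i => hs _) (fun i => hord i.castSucc (Fin.last K) (Fin.castSucc_lt_last i))
  simpa using h0.add tendsto_const_nhds

lemma gmm_aux : ∀ K L : ℕ, ∀ (α : Fin K → ℝ) (β : Fin L → ℝ),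
    (∀ i, 0 < α i) → (∀ j, 0 < β j) →
    ∀ (μ s : Fin K → ℝ) (ν t : Fin L → ℝ),
    (∀ i, 0 < s i) → (∀ j, 0 < t j) →
    (∀ i j : Fin K, i < j → s i < s j ∨ (s i = s j ∧ μ i < μ j)) →
    (∀ i j : Fin L, i < j → t i < t j ∨ (t i = t j ∧ ν i < ν j)) →
    ∀ E : Set ℝ, ¬ BddAbove E →
    (∀ x ∈ E, ∑ i, α i * gauss1 (μ i) (s i) x = ∑ j, β j * gauss1 (ν j) (t j) x) →
    ∃ hKL : K = L, ∀ i : Fin K,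
      α i = β (Fin.cast hKL i) ∧ μ i = ν (Fin.cast hKL i) ∧ s i = t (Fin.cast hKL i) := by
  intro K
  induction K with
  | zero =>
    intro L α β hα hβ μ s ν t hs ht hordK hordL E hE heq
    obtain ⟨x, hxE, _⟩ := not_bddAbove_iff.mp hE 0
    match L with
    | 0 => exact ⟨rfl, fun i => i.elim0⟩
    | M + 1 =>
      exfalso
      have h := heq x hxE
      simp only [Finset.univ_eq_empty, Finset.sum_empty] at h
      have hpos : 0 < ∑ j, β j * gauss1 (ν j) (t j) x :=
        Finset.sum_pos (fun j _ => mul_pos (hβ j) (gauss1_pos (ht j) x)) Finset.univ_nonempty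
      rw [← h] at hpos
      exact lt_irrefl 0 hpos
  | succ K ih =>
    intro L α β hα hβ μ s ν t hs ht hordK hordL E hE heq
    match L with
    | 0 =>
      exfalso
      obtain ⟨x, hxE, _⟩ := not_bddAbove_iff.mp hE 0
      have h := heq x hxE
      simp only [Finset.univ_eq_empty, Finset.sum_empty] at h
      have hpos : 0 < ∑ i, α i * gauss1 (μ i) (s i) x :=
        Finset.sum_pos (fun i _ => mul_pos (hα i) (gauss1_pos (hs i) x)) Finset.univ_nonempty
      rw [h] at hpos
      exact lt_irrefl 0 hpos
    | M + 1 =>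
      -- the filter of large elements of E
      have hF : (atTop ⊓ Filter.principal E).NeBot := by
        rw [Filter.inf_principal_neBot_iff]
        intro U hU
        obtain ⟨a, ha⟩ := mem_atTop_sets.mp hU
        obtain ⟨x, hxE, hax⟩ := not_bddAbove_iff.mp hE a
        exact ⟨x, ha x hax.le, hxE⟩
      set F := atTop ⊓ Filter.principal E with hFdef
      have hEF : E ∈ F := Filter.mem_inf_of_right (Filter.mem_principal_self E)
      have hLle : F ≤ atTop := inf_le_left
      -- key: compare the two mixtures over a common dominant gaussian
      have main : ∀ (M2 S2 : ℝ), 0 < S2 →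
          (∀ i : Fin (K+1), s i < S2 ∨ (s i = S2 ∧ μ i < M2)) →
          (Tendsto (fun x => (∑ j, β j * gauss1 (ν j) (t j) x) / gauss1 M2 S2 x)
            atTop (nhds (β (Fin.last M)))) → False := by
        intro M2 S2 hS2 hcomp hR
        have hL0 := (sum_ratio_tendsto_zero α μ s M2 S2 hS2 hs hcomp).mono_left hLle
        have hR' := hR.mono_left hLle
        have hev : Tendsto (fun x => (∑ j, β j * gauss1 (ν j) (t j) x) / gauss1 M2 S2 x)
            F (nhds 0) := by
          apply hL0.congr'
          filter_upwards [hEF] with x hx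
          rw [heq x hx]
        exact absurd (tendsto_nhds_unique hev hR') (ne_of_lt (hβ _))
      have mainR : ∀ (M1 S1 : ℝ), 0 < S1 →
          (∀ j : Fin (M+1), t j < S1 ∨ (t j = S1 ∧ ν j < M1)) →
          (Tendsto (fun x => (∑ i, α i * gauss1 (μ i) (s i) x) / gauss1 M1 S1 x)
            atTop (nhds (α (Fin.last K)))) → False := by
        intro M1 S1 hS1 hcomp hLt
        have hR0 := (sum_ratio_tendsto_zero β ν t M1 S1 hS1 ht hcomp).mono_left hLle
        have hLt' := hLt.mono_left hLle
        have hev : Tendsto (fun x => (∑ i, α i * gauss1 (μ i) (s i) x) / gauss1 M1 S1 x)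
            F (nhds 0) := by
          apply hR0.congr'
          filter_upwards [hEF] with x hx
          rw [← heq x hx]
        exact absurd (tendsto_nhds_unique hev hLt') (ne_of_lt (hα _))
      -- components ≤ top, as lex
      have hcompK : ∀ i : Fin (K+1), i ≠ Fin.last K →
          s i < s (Fin.last K) ∨ (s i = s (Fin.last K) ∧ μ i < μ (Fin.last K)) := by
        intro i hi
        exact hordK i (Fin.last K) (lt_of_le_of_ne (Fin.le_last i) hi)
      have hcompL : ∀ j : Fin (M+1), j ≠ Fin.last M →
          t j < t (Fin.last M) ∨ (t j = t (Fin.last M) ∧ ν j < ν (Fin.last M)) := by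
        intro j hj
        exact hordL j (Fin.last M) (lt_of_le_of_ne (Fin.le_last j) hj)
      -- tops must coincide
      have htops : s (Fin.last K) = t (Fin.last M) ∧ μ (Fin.last K) = ν (Fin.last M) := by
        by_contra hne
        have hlex : (s (Fin.last K) < t (Fin.last M) ∨
            (s (Fin.last K) = t (Fin.last M) ∧ μ (Fin.last K) < ν (Fin.last M))) ∨
            (t (Fin.last M) < s (Fin.last K) ∨
            (t (Fin.last M) = s (Fin.last K) ∧ ν (Fin.last M) < μ (Fin.last K))) := by
          rcases lt_trichotomy (s (Fin.last K)) (t (Fin.last M)) with h | h | h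
          · exact Or.inl (Or.inl h)
          · rcases lt_trichotomy (μ (Fin.last K)) (ν (Fin.last M)) with h' | h' | h'
            · exact Or.inl (Or.inr ⟨h, h'⟩)
            · exact absurd ⟨h, h'⟩ hne
            · exact Or.inr (Or.inr ⟨h.symm, h'⟩)
          · exact Or.inr (Or.inl h)
        rcases hlex with h | h
        · refine main (ν (Fin.last M)) (t (Fin.last M)) (ht _) ?_
            (mixture_ratio β ν t ht hordL)
          intro i
          by_cases hi : i = Fin.last K
          · subst hi; exact h
          · exact lex_trans (hcompK i hi) h
        · refine mainR (μ (Fin.last K)) (s (Fin.last K)) (hs _) ?_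
            (mixture_ratio α μ s hs hordK)
          intro j
          by_cases hj : j = Fin.last M
          · subst hj; exact h
          · exact lex_trans (hcompL j hj) h
      obtain ⟨hst, hμν⟩ := htops
      -- top weights coincide
      have hαβ : α (Fin.last K) = β (Fin.last M) := by
        have hLt := (mixture_ratio α μ s hs hordK).mono_left hLle
        have hRt := (mixture_ratio β ν t ht hordL).mono_left hLle
        have hRt' : Tendsto (fun x => (∑ i, α i * gauss1 (μ i) (s i) x)
            / gauss1 (μ (Fin.last K)) (s (Fin.last K)) x) F (nhds (β (Fin.last M))) := by
          rw [hst, hμν]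
          apply hRt.congr'
          filter_upwards [hEF] with x hx
          rw [heq x hx]
        exact tendsto_nhds_unique hLt hRt'
      -- peel off the top components
      have heq' : ∀ x ∈ E,
          ∑ i : Fin K, α i.castSucc * gauss1 (μ i.castSucc) (s i.castSucc) x
            = ∑ j : Fin M, β j.castSucc * gauss1 (ν j.castSucc) (t j.castSucc) x := by
        intro x hx
        have h := heq x hx
        rw [Fin.sum_univ_castSucc, Fin.sum_univ_castSucc (f := fun j =>
          β j * gauss1 (ν j) (t j) x), hαβ, hμν, hst] at h
        exact add_right_cancel h
      obtain ⟨hKM, hcompEq⟩ := ih M (fun i => α i.castSucc) (fun j => β j.castSucc)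
        (fun i => hα _) (fun j => hβ _) (fun i => μ i.castSucc) (fun i => s i.castSucc)
        (fun j => ν j.castSucc) (fun j => t j.castSucc) (fun i => hs _) (fun j => ht _)
        (fun i j hij => hordK i.castSucc j.castSucc (by simpa using hij))
        (fun i j hij => hordL i.castSucc j.castSucc (by simpa using hij))
        E hE heq'
      subst hKM
      refine ⟨rfl, fun i => ?_⟩
      simp only [Fin.cast_refl, id]
      refine Fin.lastCases ?_ ?_ i
      · exact ⟨hαβ, hμν, hst⟩
      · intro i'
        exact hcompEq i'

/-- Identifiability of univariate Gaussian mixtures: if two mixtures with positive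
weights, distinct lexicographically ordered (variance, mean) parameters agree on a
set unbounded above, then they have the same number of components and identical
parameters. -/
theorem gmm_identifiable (K L : ℕ) (α : Fin K → ℝ) (β : Fin L → ℝ)
    (hα : ∀ i, 0 < α i) (hβ : ∀ j, 0 < β j)
    (μ : Fin K → ℝ) (s : Fin K → ℝ) (ν : Fin L → ℝ) (t : Fin L → ℝ)
    (hs : ∀ i, 0 < s i) (ht : ∀ j, 0 < t j)
    (hordK : ∀ i j : Fin K, i < j → s i < s j ∨ (s i = s j ∧ μ i < μ j))
    (hordL : ∀ i j : Fin L, i < j → t i < t j ∨ (t i = t j ∧ ν i < ν j))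
    (E : Set ℝ) (hE : ¬ BddAbove E)
    (heq : ∀ x ∈ E, ∑ i, α i * gauss1 (μ i) (s i) x = ∑ j, β j * gauss1 (ν j) (t j) x) :
    ∃ hKL : K = L, ∀ i : Fin K,
      α i = β (Fin.cast hKL i) ∧ μ i = ν (Fin.cast hKL i) ∧ s i = t (Fin.cast hKL i) := by
  exact gmm_aux K L α β hα hβ μ s ν t hs ht hordK hordL E hE heq
end
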